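/- arXiv:2207.00079 — 2 statements merged into one kernel-verified Lean document; each statement's English description precedes it below -/
import Mathlib

section
/- Let k ≥ 1 and let W : GL⁺(3,ℝ) → [0,∞) be a C^k strain energy function that is objective, isotropic, and homogeneous of degree h. Then there exists a C^k function f : ℝ₊ → [0,∞) with f'(1) = 0 such that W(F(λ,ω)) = (λ₁λ₂²)^{h/3} f(λ₁/λ₂) for all λ = (λ₁,λ₂) ∈ ℝ₊² and all ω ∈ S². -/
open Matrix Set MeasureTheory

noncomputable section

attribute [local instance] Matrix.normedAddCommGroup Matrix.normedSpace

abbrev Mat3 := Matrix (Fin 3) (Fin 3) ℝ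
abbrev V3 := EuclideanSpace ℝ (Fin 3)

def GLpos (F : Mat3) : Prop := 0 < F.det

def Objective (W : Mat3 → ℝ) : Prop :=
  ∀ F : Mat3, GLpos F → ∀ U : Mat3, U * Uᵀ = 1 → U.det = 1 → W (U * F) = W F

def Isotropic (W : Mat3 → ℝ) : Prop :=
  ∀ F : Mat3, GLpos F → ∀ U : Mat3, U * Uᵀ = 1 → U.det = 1 → W (F * U) = W F

def HomDeg (W : Mat3 → ℝ) (h : ℝ) : Prop :=
  ∀ F : Mat3, GLpos F → ∀ σ : ℝ, 0 < σ → W (σ • F) = σ ^ h * W F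

noncomputable def PK (W : Mat3 → ℝ) (F : Mat3) : Mat3 :=
  Matrix.of fun i j => fderiv ℝ W F (Matrix.single i j 1)

noncomputable def jac (φ : V3 → V3) (y : V3) : Mat3 :=
  Matrix.of fun i j => fderiv ℝ (fun z => φ z i) y (EuclideanSpace.single j 1)

noncomputable def jacIn (φ : V3 → V3) (s : Set V3) (y : V3) : Mat3 :=
  Matrix.of fun i j => fderivWithin ℝ (fun z => φ z i) s y (EuclideanSpace.single j 1)

noncomputable def divMat (S : V3 → Mat3) (y : V3) : V3 :=
  WithLp.toLp 2 fun i => ∑ j : Fin 3, fderiv ℝ (fun z => S z i j) y (EuclideanSpace.single j 1)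

noncomputable def P1 (ω : V3) : Mat3 := Matrix.vecMulVec (fun i => ω i) (fun i => ω i)

noncomputable def P2 (ω : V3) : Mat3 := 1 - P1 ω

noncomputable def Fmat (l1 l2 : ℝ) (ω : V3) : Mat3 := l1 • P1 ω + l2 • P2 ω

open scoped Classical in
/-- The spherically symmetric map `y ↦ φ(|y|) y/|y|` (with value `0` at `y = 0`). -/
noncomputable def sphMap (φ : ℝ → ℝ) (y : V3) : V3 :=
  if y = 0 then 0 else (φ ‖y‖ / ‖y‖) • y

/-!
Since `F(λ,ω) = λ₂ I + (λ₁ - λ₂) ω⊗ω`, conjugating by a rotation that sends `e₀` to `±ω` turns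
`F(λ,e₀)` into `F(λ,ω)`; objectivity and isotropy together make `W` conjugation invariant, so
`W(F(λ,ω))` does not depend on `ω`. Homogeneity then gives `W(F(λ,ω)) = λ₂^h g(λ₁/λ₂)` with
`g(u) = W(F(u,1,e₀))`, and `f(u) = u^{-h/3} g(u)` is the required function. For `f'(1) = 0`:
by the same invariance, `DW(I)[ω⊗ω]` is independent of `ω`, the three projections `eᵢ⊗eᵢ` sum to
`I`, and Euler's relation `DW(I)[I] = h W(I)` yields `g'(1) = DW(I)[e₀⊗e₀] = (h/3) g(1)`.
-/

open Real

local notation "e₀" => (EuclideanSpace.single (0 : Fin 3) (1 : ℝ) : V3)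

lemma isOpen_setOf_GLpos : IsOpen {F : Mat3 | GLpos F} :=
  isOpen_Ioi.preimage (continuous_id.matrix_det)

lemma GLpos_one : GLpos 1 := by
  simp [GLpos]

lemma conj_vecMulVec_self {n R : Type*} [Fintype n] [CommSemiring R] (M : Matrix n n R)
    (a : n → R) : M * vecMulVec a a * Mᵀ = vecMulVec (M *ᵥ a) (M *ᵥ a) := by
  rw [mul_vecMulVec, vecMulVec_mul, vecMul_transpose]

lemma exists_orthogonal_mulVec_single {ι : Type*} [Fintype ι] [DecidableEq ι] (i : ι)
    {ω : EuclideanSpace ℝ ι} (hω : ‖ω‖ = 1) :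
    ∃ R : Matrix ι ι ℝ, R * Rᵀ = 1 ∧ R *ᵥ Pi.single i 1 = fun j => ω j := by
  have horth : Orthonormal ℝ (({i} : Set ι).domRestrict fun _ => ω) :=
    ⟨fun _ => hω, fun j j' hjj' => absurd (Subsingleton.elim j j') hjj'⟩
  obtain ⟨b, hb⟩ := horth.exists_orthonormalBasis_extension_of_card_eq (by simp)
  have hR := (EuclideanSpace.basisFun ι ℝ).toMatrix_orthonormalBasis_mem_orthogonal b
  refine ⟨_, (mem_orthogonalGroup_iff _ _).mp hR, ?_⟩
  ext j
  simp [Module.Basis.toMatrix_apply, hb i rfl]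

lemma ofLp_single {𝕜 ι : Type*} [RCLike 𝕜] [DecidableEq ι] (i : ι) (a : 𝕜) :
    (fun j => (EuclideanSpace.single i a : EuclideanSpace 𝕜 ι) j) = Pi.single i a := by
  ext j
  simp [Pi.single_apply]

lemma exists_rotation_conj_P1 (ω : V3) (hω : ‖ω‖ = 1) :
    ∃ R : Mat3, R * Rᵀ = 1 ∧ R.det = 1 ∧ R * P1 e₀ * Rᵀ = P1 ω := by
  obtain ⟨R, hR, hRω⟩ := exists_orthogonal_mulVec_single 0 hω
  have hconj : R * P1 e₀ * Rᵀ = P1 ω := by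
    rw [P1, ofLp_single, conj_vecMulVec_self, hRω, P1]
  have hdet : R.det ^ 2 = 1 := by
    simpa [sq, det_transpose] using congrArg det hR
  -- in odd dimension `-R` is a rotation whenever `R` is a reflection, with the same conjugation
  rcases sq_eq_one_iff.mp hdet with hdet | hdet
  · exact ⟨R, hR, hdet, hconj⟩
  · exact ⟨-R, by simpa using hR, by simp [det_neg, hdet]; norm_num, by simpa using hconj⟩

lemma Fmat_eq (l1 l2 : ℝ) (ω : V3) : Fmat l1 l2 ω = l2 • 1 + (l1 - l2) • P1 ω := by
  rw [Fmat, P2]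
  module

lemma Fmat_eq_smul (l1 : ℝ) {l2 : ℝ} (hl2 : l2 ≠ 0) (ω : V3) :
    Fmat l1 l2 ω = l2 • Fmat (l1 / l2) 1 ω := by
  rw [Fmat, Fmat, smul_add, smul_smul, smul_smul, mul_div_cancel₀ _ hl2, mul_one]

lemma Fmat_one_one (ω : V3) : Fmat 1 1 ω = 1 := by
  simp [Fmat_eq]

lemma norm_single_one (i : Fin 3) : ‖(EuclideanSpace.single i 1 : V3)‖ = 1 := by
  simp

lemma conj_Fmat {R : Mat3} (hR : R * Rᵀ = 1) {ω ω' : V3} (hω : R * P1 ω * Rᵀ = P1 ω')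
    (l1 l2 : ℝ) : R * Fmat l1 l2 ω * Rᵀ = Fmat l1 l2 ω' := by
  simp only [Fmat_eq, Matrix.mul_add, Matrix.add_mul, Matrix.mul_smul, Matrix.smul_mul,
    Matrix.mul_one, hR, hω]

lemma P1_single (i : Fin 3) : P1 (EuclideanSpace.single i 1) = Matrix.single i i 1 := by
  rw [P1, ofLp_single, single_eq_single_vecMulVec_single]

lemma sum_P1_single : ∑ i : Fin 3, P1 (EuclideanSpace.single i 1) = 1 := by
  simp only [P1_single, sum_single_one]

lemma det_Fmat_single_zero (l1 l2 : ℝ) :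
    (Fmat l1 l2 e₀).det = l1 * l2 ^ 2 := by
  have hdiag : Fmat l1 l2 e₀ = diagonal ![l1, l2, l2] := by
    rw [Fmat_eq, P1_single]
    ext a b
    fin_cases a <;> fin_cases b <;> simp
  rw [hdiag, det_diagonal, Fin.prod_univ_three]
  simp [sq, mul_assoc]

lemma GLpos_Fmat_single_zero {l1 l2 : ℝ} (h1 : 0 < l1) (h2 : 0 < l2) :
    GLpos (Fmat l1 l2 e₀) := by
  rw [GLpos, det_Fmat_single_zero]
  positivity

section Invariance

variable {W : Mat3 → ℝ}

lemma apply_rotation_conj_eq (hobj : Objective W) (hiso : Isotropic W) {F : Mat3} (hF : GLpos F)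
    {R : Mat3} (hR : R * Rᵀ = 1) (hdet : R.det = 1) : W (R * F * Rᵀ) = W F := by
  have hRt : Rᵀ * Rᵀᵀ = 1 := by rw [transpose_transpose]; exact mul_eq_one_comm.mp hR
  have hdett : Rᵀ.det = 1 := by rw [det_transpose, hdet]
  have hFRt : GLpos (F * Rᵀ) := by rwa [GLpos, det_mul, hdett, mul_one]
  rw [Matrix.mul_assoc, hobj _ hFRt R hR hdet, hiso F hF Rᵀ hRt hdett]

lemma apply_Fmat_eq_apply_Fmat_single_zero (hobj : Objective W) (hiso : Isotropic W)
    {l1 l2 : ℝ} (hF : GLpos (Fmat l1 l2 e₀)) {ω : V3} (hω : ‖ω‖ = 1) :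
    W (Fmat l1 l2 ω) = W (Fmat l1 l2 e₀) := by
  obtain ⟨R, hR, hdet, hconj⟩ := exists_rotation_conj_P1 ω hω
  rw [← conj_Fmat hR hconj, apply_rotation_conj_eq hobj hiso hF hR hdet]

lemma HomDeg.fderiv_apply_self {h : ℝ} (hhom : HomDeg W h) {F : Mat3} (hF : GLpos F)
    (hd : DifferentiableAt ℝ W F) : fderiv ℝ W F F = h * W F := by
  have hline : HasDerivAt (fun σ : ℝ => W (σ • F)) (fderiv ℝ W F F) 1 := by
    have hσ : HasDerivAt (fun σ : ℝ => σ • F) ((1 : ℝ) • F) 1 := (hasDerivAt_id 1).smul_const F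
    rw [one_smul] at hσ
    exact hd.hasFDerivAt.comp_hasDerivAt_of_eq 1 hσ (one_smul ℝ F).symm
  have hpow : HasDerivAt (fun σ : ℝ => σ ^ h * W F) (h * W F) 1 := by
    simpa using (hasDerivAt_rpow_const (p := h) (Or.inl one_ne_zero)).mul_const (W F)
  have heq : (fun σ : ℝ => W (σ • F)) =ᶠ[nhds 1] fun σ => σ ^ h * W F := by
    filter_upwards [Ioi_mem_nhds one_pos] with σ hσ using hhom F hF σ hσ
  exact hline.unique (hpow.congr_of_eventuallyEq heq)

lemma hasDerivAt_apply_Fmat_one {L : Mat3 →L[ℝ] ℝ} (hW : HasFDerivAt W L 1) (ω : V3) :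
    HasDerivAt (fun u => W (Fmat u 1 ω)) (L (P1 ω)) 1 := by
  have hline : HasDerivAt (fun u : ℝ => Fmat u 1 ω) (P1 ω) 1 := by
    have h := (((hasDerivAt_id (1 : ℝ)).sub_const 1).smul_const (P1 ω)).const_add 1
    simp only [Fmat_eq, one_smul]
    rwa [one_smul] at h
  exact hW.comp_hasDerivAt_of_eq 1 hline (Fmat_one_one ω).symm

lemma fderiv_one_P1_eq (hobj : Objective W) (hiso : Isotropic W) (hd : DifferentiableAt ℝ W 1)
    {ω : V3} (hω : ‖ω‖ = 1) :
    fderiv ℝ W 1 (P1 ω) = fderiv ℝ W 1 (P1 e₀) := by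
  have heq : (fun u => W (Fmat u 1 e₀)) =ᶠ[nhds 1]
      fun u => W (Fmat u 1 ω) := by
    filter_upwards [Ioi_mem_nhds one_pos] with u hu
    exact
      (apply_Fmat_eq_apply_Fmat_single_zero hobj hiso (GLpos_Fmat_single_zero hu one_pos) hω).symm
  exact (hasDerivAt_apply_Fmat_one hd.hasFDerivAt ω).unique
    ((hasDerivAt_apply_Fmat_one hd.hasFDerivAt _).congr_of_eventuallyEq heq.symm)

lemma fderiv_one_P1 (hobj : Objective W) (hiso : Isotropic W) {h : ℝ} (hhom : HomDeg W h)
    (hd : DifferentiableAt ℝ W 1) {ω : V3} (hω : ‖ω‖ = 1) :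
    fderiv ℝ W 1 (P1 ω) = h / 3 * W 1 := by
  have hsum : ∑ i : Fin 3, fderiv ℝ W 1 (P1 (EuclideanSpace.single i 1)) = h * W 1 := by
    rw [← map_sum, sum_P1_single, hhom.fderiv_apply_self GLpos_one hd]
  simp only [fun i => fderiv_one_P1_eq hobj hiso hd (norm_single_one i), Finset.sum_const,
    Finset.card_univ, Fintype.card_fin, nsmul_eq_mul, Nat.cast_ofNat] at hsum
  rw [fderiv_one_P1_eq hobj hiso hd hω]
  linarith

lemma contDiffOn_apply_Fmat_single_zero {n : ℕ∞} (hW : ContDiffOn ℝ n W {F | GLpos F}) :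
    ContDiffOn ℝ n (fun u => W (Fmat u 1 e₀)) (Ioi 0) := by
  refine hW.comp (ContDiff.contDiffOn ?_) fun u hu => GLpos_Fmat_single_zero hu one_pos
  simp only [Fmat_eq]
  fun_prop

end Invariance

lemma contDiffOn_rpow_const_Ioi {n : WithTop ℕ∞} {p : ℝ} :
    ContDiffOn ℝ n (fun u : ℝ => u ^ p) (Ioi 0) :=
  fun _ hu => (contDiffAt_rpow_const_of_ne (ne_of_gt hu)).contDiffWithinAt

lemma deriv_rpow_neg_mul_eq_zero {g : ℝ → ℝ} {c : ℝ} (hg : HasDerivAt g (c * g 1) 1) :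
    deriv (fun u => u ^ (-c) * g u) 1 = 0 := by
  have hpow : HasDerivAt (fun u : ℝ => u ^ (-c)) (-c) 1 := by
    simpa using hasDerivAt_rpow_const (p := -c) (x := 1) (Or.inl one_ne_zero)
  exact (hpow.mul hg).deriv.trans (by rw [one_rpow]; ring)

lemma rpow_mul_sq_mul_rpow_div {l1 l2 : ℝ} (h1 : 0 < l1) (h2 : 0 < l2) (p : ℝ) :
    (l1 * l2 ^ 2) ^ (p / 3) * (l1 / l2) ^ (-(p / 3)) = l2 ^ p := by
  have hdiv : l1 * l2 ^ 2 / (l1 / l2) = l2 ^ (3 : ℝ) := by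
    rw [rpow_ofNat]
    field_simp
  rw [rpow_neg (by positivity), ← div_eq_mul_inv, ← div_rpow (by positivity) (by positivity),
    hdiv, ← rpow_mul h2.le]
  ring_nf

/-- For a `C^k` objective, isotropic, degree-`h` homogeneous strain energy,
there is a `C^k` function `f` on `ℝ₊` with `f'(1) = 0` such that
`W(F(λ,ω)) = (λ₁λ₂²)^{h/3} f(λ₁/λ₂)`. -/
theorem scale_invariant_strain_energy_representation
    (k : ℕ) (hk : 1 ≤ k) (W : Mat3 → ℝ) (h : ℝ)
    (hW0 : ∀ F : Mat3, GLpos F → 0 ≤ W F)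
    (hWCk : ContDiffOn ℝ (k : ℕ∞) W {F : Mat3 | GLpos F})
    (hobj : Objective W) (hiso : Isotropic W) (hhom : HomDeg W h) :
    ∃ f : ℝ → ℝ,
      ContDiffOn ℝ (k : ℕ∞) f (Set.Ioi 0) ∧
      (∀ u : ℝ, 0 < u → 0 ≤ f u) ∧
      deriv f 1 = 0 ∧
      ∀ l1 l2 : ℝ, 0 < l1 → 0 < l2 → ∀ ω : V3, ‖ω‖ = 1 →
        W (Fmat l1 l2 ω) = (l1 * l2 ^ 2) ^ (h / 3) * f (l1 / l2) := by
  have hd : DifferentiableAt ℝ W 1 :=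
    (hWCk.contDiffAt (isOpen_setOf_GLpos.mem_nhds GLpos_one)).differentiableAt
      (by exact_mod_cast (by omega : k ≠ 0))
  refine ⟨fun u => u ^ (-(h / 3)) * W (Fmat u 1 e₀), ?_, ?_, ?_, ?_⟩
  · exact contDiffOn_rpow_const_Ioi.mul (contDiffOn_apply_Fmat_single_zero hWCk)
  · exact fun u hu => mul_nonneg (rpow_nonneg hu.le _) (hW0 _ (GLpos_Fmat_single_zero hu one_pos))
  · refine deriv_rpow_neg_mul_eq_zero ?_
    rw [Fmat_one_one, ← fderiv_one_P1 hobj hiso hhom hd (norm_single_one 0)]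
    exact hasDerivAt_apply_Fmat_one hd.hasFDerivAt e₀
  · intro l1 l2 h1 h2 ω hω
    rw [apply_Fmat_eq_apply_Fmat_single_zero hobj hiso (GLpos_Fmat_single_zero h1 h2) hω,
      Fmat_eq_smul l1 h2.ne', hhom _ (GLpos_Fmat_single_zero (div_pos h1 h2) one_pos) l2 h2,
      ← rpow_mul_sq_mul_rpow_div h1 h2 h]
    ring
end
end

section
/- Fix h ∈ ℝ with κ(h) > 0, M ≥ 0, f ∈ C(M), and set δ = min{1/8, 1/(8|h|), 1/(8M)} and β(f) = f''(1). Define g(u) = (h/3)f(u) + u f'(u). If |h|/β(f) < δ, then g is strictly increasing on U(δ) and has a unique zero u₀ in U(δ); moreover |u₀ − 1| ≤ |h|/β(f) and sgn(u₀ − 1) = − sgn(h). -/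
open Set

noncomputable section

/-- `κ(h) = (h/3)(h/3 − 1)`. -/
def kap (h : ℝ) : ℝ := (h / 3) * (h / 3 - 1)

/-- The interval `U(1/8) = [7/8, 9/8]`. -/
def Iset : Set ℝ := Set.Icc (7/8 : ℝ) (9/8)

/-- The interval `U(a) = {u : |u − 1| ≤ a}`. -/
def Uset (a : ℝ) : Set ℝ := Set.Icc (1 - a) (1 + a)

/-- First derivative of `f` on `U(1/8)`. -/
noncomputable def d1 (f : ℝ → ℝ) : ℝ → ℝ := derivWithin f Iset

/-- Second derivative of `f` on `U(1/8)`. -/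
noncomputable def d2 (f : ℝ → ℝ) : ℝ → ℝ := derivWithin (d1 f) Iset

/-- Third derivative of `f` on `U(1/8)`. -/
noncomputable def d3 (f : ℝ → ℝ) : ℝ → ℝ := derivWithin (d2 f) Iset

/-- The class `C(M)`: `f` is C³ on `U(1/8)`, `f(1) = 1`, `f'(1) = 0`, `f''(1) > 0`,
and `|f'''| ≤ M f''(1)` on `U(1/8)`. -/
def CM (M : ℝ) (f : ℝ → ℝ) : Prop :=
  ContDiffOn ℝ 3 f Iset ∧ f 1 = 1 ∧ d1 f 1 = 0 ∧ 0 < d2 f 1 ∧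
    ∀ u ∈ Iset, |d3 f u| ≤ M * d2 f 1

/-- `δ = min{1/8, 1/(8|h|), 1/(8M)}`, where for `M = 0` the term `1/(8M)` is
interpreted as `+∞`. -/
noncomputable def del (h M : ℝ) : ℝ :=
  if M = 0 then min (1/8) (1 / (8 * |h|))
  else min (1/8) (min (1 / (8 * |h|)) (1 / (8 * M)))

/-- The quotient `f'(u)/(u−1)`, extended continuously at `u = 1` by `f''(1)`. -/
noncomputable def Qf (f : ℝ → ℝ) (u : ℝ) : ℝ :=
  if u = 1 then d2 f 1 else d1 f u / (u - 1)

/-- `U₁(u) = κ(h)f(u) + (2h/3)uf'(u) + u²f''(u)`. -/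
noncomputable def U1 (h : ℝ) (f : ℝ → ℝ) (u : ℝ) : ℝ :=
  kap h * f u + (2 * h / 3) * u * d1 f u + u ^ 2 * d2 f u

/-- `U₂(u) = 2κ(h)uf(u) + (h/3 − 1)u²f'(u) + (2u² + u³)f'(u)/(u−1) − u³f''(u)`. -/
noncomputable def U2 (h : ℝ) (f : ℝ → ℝ) (u : ℝ) : ℝ :=
  2 * kap h * u * f u + (h / 3 - 1) * u ^ 2 * d1 f u
    + (2 * u ^ 2 + u ^ 3) * Qf f u - u ^ 3 * d2 f u

/-- `V₁(u) = (2U₁(u) − U₂(u))/U₁(u)`. -/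
noncomputable def V1 (h : ℝ) (f : ℝ → ℝ) (u : ℝ) : ℝ :=
  (2 * U1 h f u - U2 h f u) / U1 h f u

/-- `V₂(u) = (κ(h) + β(f)) u / U₁(u)`. -/
noncomputable def V2 (h : ℝ) (f : ℝ → ℝ) (u : ℝ) : ℝ :=
  (kap h + d2 f 1) * u / U1 h f u

/-! On `U(δ)` the three terms of `δ` make the Taylor approximations `f'' ≈ β` and
`f'(u) ≈ β(u − 1)` accurate up to a factor `1 ± 1/8`, and keep `f` close to `1`. Hence
`g' = (h/3 + 1) f' + u f'' > 0` there, `g(1) = h/3`, and `g(1 − h/β)` has the opposite sign, since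
`f'(1 − h/β) ≈ −h`. The intermediate value theorem puts the zero between `1` and `1 − h/β`, and
monotonicity of `g` compares the signs of `u₀ − 1` and `g(u₀) − g(1) = −h/3`. -/

lemma del_le_one_div_eight (h M : ℝ) : del h M ≤ 1 / 8 := by
  unfold del; split_ifs <;> exact min_le_left _ _

lemma abs_mul_del_le (h M : ℝ) : |h| * del h M ≤ 1 / 8 := by
  have hle : del h M ≤ 1 / (8 * |h|) := by
    unfold del; split_ifs
    · exact min_le_right _ _
    · exact (min_le_right _ _).trans (min_le_left _ _)
  rcases eq_or_ne h 0 with rfl | hh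
  · norm_num
  · calc |h| * del h M ≤ |h| * (1 / (8 * |h|)) := by gcongr
      _ = 1 / 8 := by field_simp

lemma mul_del_le {h M : ℝ} (hδ : 0 ≤ del h M) : M * del h M ≤ 1 / 8 := by
  rcases le_or_gt M 0 with hM | hM
  · nlinarith
  · have hle : del h M ≤ 1 / (8 * M) := by
      rw [del, if_neg hM.ne']
      exact (min_le_right _ _).trans (min_le_right _ _)
    calc M * del h M ≤ M * (1 / (8 * M)) := by gcongr
      _ = 1 / 8 := by field_simp

lemma mem_Uset {δ u : ℝ} : u ∈ Uset δ ↔ |u - 1| ≤ δ := by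
  rw [Uset, ← Real.closedBall_eq_Icc, Metric.mem_closedBall, Real.dist_eq]

lemma one_mem_Uset {δ : ℝ} (hδ : 0 ≤ δ) : (1 : ℝ) ∈ Uset δ :=
  mem_Uset.2 (by simpa using hδ)

lemma Uset_subset_Iset {δ : ℝ} (hδ : δ ≤ 1 / 8) : Uset δ ⊆ Iset :=
  Icc_subset_Icc (by linarith) (by linarith)

lemma convex_Iset : Convex ℝ Iset := convex_Icc _ _

lemma convex_Uset (δ : ℝ) : Convex ℝ (Uset δ) := convex_Icc _ _

lemma abs_one_sub_div_sub_one {h β : ℝ} (hβ : 0 < β) : |1 - h / β - 1| = |h| / β := by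
  rw [sub_sub_cancel_left, abs_neg, abs_div, abs_of_pos hβ]

lemma uniqueDiffOn_Iset : UniqueDiffOn ℝ Iset := uniqueDiffOn_Icc (by norm_num)

lemma zero_mem_uIcc_of_mul_nonpos {α : Type*} [Ring α] [LinearOrder α] [IsStrictOrderedRing α]
    {a b : α} (hab : a * b ≤ 0) : 0 ∈ uIcc a b := by
  rcases mul_nonpos_iff.1 hab with ⟨ha, hb⟩ | ⟨ha, hb⟩
  exacts [mem_uIcc.2 (Or.inr ⟨hb, ha⟩), mem_uIcc.2 (Or.inl ⟨ha, hb⟩)]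

lemma StrictMonoOn.sign_sub_eq {s : Set ℝ} {g : ℝ → ℝ} (hg : StrictMonoOn g s) {a b : ℝ}
    (ha : a ∈ s) (hb : b ∈ s) : Real.sign (a - b) = Real.sign (g a - g b) := by
  rcases lt_trichotomy a b with hab | rfl | hab
  · rw [Real.sign_of_neg (sub_neg.2 hab), Real.sign_of_neg (sub_neg.2 (hg ha hb hab))]
  · simp
  · rw [Real.sign_of_pos (sub_pos.2 hab), Real.sign_of_pos (sub_pos.2 (hg hb ha hab))]

lemma Real.sign_div_of_pos {r c : ℝ} (hc : 0 < c) : Real.sign (r / c) = Real.sign r := by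
  rcases lt_trichotomy r 0 with hr | rfl | hr
  · rw [Real.sign_of_neg hr, Real.sign_of_neg (div_neg_of_neg_of_pos hr hc)]
  · simp
  · rw [Real.sign_of_pos hr, Real.sign_of_pos (div_pos hr hc)]

theorem Convex.abs_sub_sub_mul_le {s : Set ℝ} (hs : Convex ℝ s) {f f' : ℝ → ℝ}
    (hf : ∀ x ∈ s, HasDerivWithinAt f (f' x) s x) {c C : ℝ} (hC : ∀ x ∈ s, |f' x - c| ≤ C)
    {a b : ℝ} (ha : a ∈ s) (hb : b ∈ s) : |f b - f a - c * (b - a)| ≤ C * |b - a| := by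
  have key := hs.norm_image_sub_le_of_norm_hasDerivWithin_le (f := fun x => f x - c * x)
    (f' := fun x => f' x - c)
    (fun x hx => ((hf x hx).sub ((hasDerivWithinAt_id x s).const_mul c)).congr_deriv (by simp))
    (fun x hx => (Real.norm_eq_abs _).trans_le (hC x hx)) ha hb
  rw [Real.norm_eq_abs, Real.norm_eq_abs] at key
  convert key using 2
  ring

def boundaryFun (h : ℝ) (f : ℝ → ℝ) (u : ℝ) : ℝ := h / 3 * f u + u * d1 f u

namespace CM

variable {M δ h x u : ℝ} {f : ℝ → ℝ}

lemma contDiffOn_d1 (hf : CM M f) : ContDiffOn ℝ 2 (d1 f) Iset :=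
  hf.1.derivWithin uniqueDiffOn_Iset (by norm_num)

lemma contDiffOn_d2 (hf : CM M f) : ContDiffOn ℝ 1 (d2 f) Iset :=
  hf.contDiffOn_d1.derivWithin uniqueDiffOn_Iset (by norm_num)

lemma hasDerivWithinAt (hf : CM M f) (hx : x ∈ Iset) : HasDerivWithinAt f (d1 f x) Iset x :=
  (hf.1.differentiableOn (by norm_num) x hx).hasDerivWithinAt

lemma hasDerivWithinAt_d1 (hf : CM M f) (hx : x ∈ Iset) :
    HasDerivWithinAt (d1 f) (d2 f x) Iset x :=
  (hf.contDiffOn_d1.differentiableOn (by norm_num) x hx).hasDerivWithinAt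

lemma hasDerivWithinAt_d2 (hf : CM M f) (hx : x ∈ Iset) :
    HasDerivWithinAt (d2 f) (d3 f x) Iset x :=
  (hf.contDiffOn_d2.differentiableOn (by norm_num) x hx).hasDerivWithinAt

lemma hasDerivWithinAt_boundaryFun (hf : CM M f) (hx : x ∈ Iset) :
    HasDerivWithinAt (boundaryFun h f) ((h / 3 + 1) * d1 f x + x * d2 f x) Iset x :=
  (((hf.hasDerivWithinAt hx).const_mul (h / 3)).add
    ((hasDerivWithinAt_id x Iset).mul (hf.hasDerivWithinAt_d1 hx))).congr_deriv (by simp; ring)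

lemma continuousOn_boundaryFun (hf : CM M f) : ContinuousOn (boundaryFun h f) Iset :=
  fun _ hx => (hf.hasDerivWithinAt_boundaryFun hx).continuousWithinAt

lemma boundaryFun_one (hf : CM M f) : boundaryFun h f 1 = h / 3 := by
  simp [boundaryFun, hf.2.1, hf.2.2.1]

section Estimates

variable (hf : CM M f) (hδ : δ ≤ 1 / 8) (hMδ : M * δ ≤ 1 / 8)
include hf hδ hMδ

lemma abs_d2_sub_le (hu : u ∈ Uset δ) : |d2 f u - d2 f 1| ≤ d2 f 1 / 8 := by
  have hd3 := hf.2.2.2.2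
  have h1 : (1 : ℝ) ∈ Iset := ⟨by norm_num, by norm_num⟩
  have hMβ : 0 ≤ M * d2 f 1 := (abs_nonneg _).trans (hd3 1 h1)
  have key := convex_Iset.abs_sub_sub_mul_le (fun x hx => hf.hasDerivWithinAt_d2 hx) (c := 0)
    (fun x hx => by simpa using hd3 x hx) h1 (Uset_subset_Iset hδ hu)
  rw [zero_mul, sub_zero] at key
  calc |d2 f u - d2 f 1| ≤ M * d2 f 1 * |u - 1| := key
    _ ≤ M * d2 f 1 * δ := by gcongr; exact mem_Uset.1 hu
    _ = M * δ * d2 f 1 := by ring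
    _ ≤ 1 / 8 * d2 f 1 := by gcongr; exact hf.2.2.2.1.le
    _ = d2 f 1 / 8 := by ring

lemma abs_d1_sub_le (hu : u ∈ Uset δ) : |d1 f u - d2 f 1 * (u - 1)| ≤ d2 f 1 / 8 * |u - 1| := by
  have h1 : (1 : ℝ) ∈ Uset δ := one_mem_Uset ((abs_nonneg _).trans (mem_Uset.1 hu))
  have key := (convex_Uset δ).abs_sub_sub_mul_le
    (fun x hx => (hf.hasDerivWithinAt_d1 (Uset_subset_Iset hδ hx)).mono (Uset_subset_Iset hδ))
    (fun x hx => hf.abs_d2_sub_le hδ hMδ hx) h1 hu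
  rwa [hf.2.2.1, sub_zero] at key

lemma abs_d1_le (hu : u ∈ Uset δ) : |d1 f u| ≤ 9 * d2 f 1 / 8 * |u - 1| := by
  have hlin : |d2 f 1 * (u - 1)| = d2 f 1 * |u - 1| := by rw [abs_mul, abs_of_pos hf.2.2.2.1]
  linarith [hf.abs_d1_sub_le hδ hMδ hu, abs_sub_abs_le_abs_sub (d1 f u) (d2 f 1 * (u - 1))]

lemma abs_sub_one_le (hu : u ∈ Uset δ) : |f u - 1| ≤ 9 * d2 f 1 / 8 * δ * |u - 1| := by
  have h1 : (1 : ℝ) ∈ Uset δ := one_mem_Uset ((abs_nonneg _).trans (mem_Uset.1 hu))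
  have key := (convex_Uset δ).abs_sub_sub_mul_le
    (fun x hx => (hf.hasDerivWithinAt (Uset_subset_Iset hδ hx)).mono (Uset_subset_Iset hδ))
    (c := 0) (C := 9 * d2 f 1 / 8 * δ) (fun x hx => by
      rw [sub_zero]
      have := hf.2.2.2.1
      exact (hf.abs_d1_le hδ hMδ hx).trans (by gcongr; exact mem_Uset.1 hx)) h1 hu
  rwa [hf.2.1, zero_mul, sub_zero] at key

lemma boundaryFun_deriv_pos (hhδ : |h| * δ ≤ 1 / 8) (hx : x ∈ Uset δ) :
    0 < (h / 3 + 1) * d1 f x + x * d2 f x := by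
  have hβ := hf.2.2.2.1
  have hx1 := mem_Uset.1 hx
  have hd1 : |d1 f x| ≤ 9 * d2 f 1 / 8 * δ :=
    (hf.abs_d1_le hδ hMδ hx).trans (by gcongr)
  have hd2 : 7 * d2 f 1 / 8 ≤ d2 f x := by
    linarith [(abs_le.1 (hf.abs_d2_sub_le hδ hMδ hx)).1]
  have hcoef : |h / 3 + 1| * δ ≤ 1 / 6 := by
    have hδ0 : 0 ≤ δ := (abs_nonneg _).trans hx1
    calc |h / 3 + 1| * δ ≤ (|h| / 3 + 1) * δ := by
          gcongr; simpa [abs_div] using abs_add_le (h / 3) 1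
      _ ≤ 1 / 6 := by linarith
  have hfirst : |(h / 3 + 1) * d1 f x| ≤ 3 * d2 f 1 / 16 :=
    calc |(h / 3 + 1) * d1 f x| ≤ |h / 3 + 1| * (9 * d2 f 1 / 8 * δ) := by
          rw [abs_mul]; gcongr
      _ = |h / 3 + 1| * δ * (9 * d2 f 1 / 8) := by ring
      _ ≤ 1 / 6 * (9 * d2 f 1 / 8) := by gcongr
      _ = 3 * d2 f 1 / 16 := by ring
  have hx78 : 7 / 8 ≤ x := (Uset_subset_Iset hδ hx).1
  have hsecond : 7 / 8 * (7 * d2 f 1 / 8) ≤ x * d2 f x :=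
    mul_le_mul hx78 hd2 (by positivity) (by linarith)
  linarith [neg_abs_le ((h / 3 + 1) * d1 f x)]

lemma strictMonoOn_boundaryFun (hhδ : |h| * δ ≤ 1 / 8) :
    StrictMonoOn (boundaryFun h f) (Uset δ) := by
  have hderiv : ∀ x ∈ Uset δ, HasDerivWithinAt (boundaryFun h f)
      ((h / 3 + 1) * d1 f x + x * d2 f x) (Uset δ) x := fun x hx =>
    (hf.hasDerivWithinAt_boundaryFun (Uset_subset_Iset hδ hx)).mono (Uset_subset_Iset hδ)
  exact strictMonoOn_of_hasDerivWithinAt_pos (convex_Uset δ)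
    (fun x hx => (hderiv x hx).continuousWithinAt)
    (fun x hx => (hderiv x (interior_subset hx)).mono interior_subset)
    (fun x hx => hf.boundaryFun_deriv_pos hδ hMδ hhδ (interior_subset hx))

/-- `1 − h/β` is where the linearization `β (u − 1)` of `f'` equals `−h`. -/
lemma mul_boundaryFun_le_zero (hhδ : |h| * δ ≤ 1 / 8) (hsmall : |h| / d2 f 1 ≤ δ) :
    h * boundaryFun h f (1 - h / d2 f 1) ≤ 0 := by
  have hβ := hf.2.2.2.1
  set u₁ := 1 - h / d2 f 1
  have hshift : u₁ - 1 = -(h / d2 f 1) := by ring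
  have hdist : |u₁ - 1| = |h| / d2 f 1 := abs_one_sub_div_sub_one hβ
  have hu₁ : u₁ ∈ Uset δ := mem_Uset.2 (hdist ▸ hsmall)
  have hd1 : |d1 f u₁ + h| ≤ |h| / 8 := by
    have key := hf.abs_d1_sub_le hδ hMδ hu₁
    rwa [hdist, hshift, mul_neg, mul_div_cancel₀ h hβ.ne', sub_neg_eq_add,
      show d2 f 1 / 8 * (|h| / d2 f 1) = |h| / 8 by field_simp] at key
  have hf₁ : f u₁ ≤ 73 / 64 := by
    have key := hf.abs_sub_one_le hδ hMδ hu₁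
    rw [hdist, show 9 * d2 f 1 / 8 * δ * (|h| / d2 f 1) = 9 / 8 * (|h| * δ) by
      field_simp] at key
    linarith [(abs_le.1 key).2]
  have hhd1 : h * d1 f u₁ ≤ -(7 / 8) * h ^ 2 := by
    have : h * (d1 f u₁ + h) ≤ |h| * (|h| / 8) :=
      (le_abs_self _).trans (by rw [abs_mul]; gcongr)
    nlinarith [sq_abs h]
  have hu₁lo : 7 / 8 ≤ u₁ := (Uset_subset_Iset hδ hu₁).1
  calc h * boundaryFun h f u₁ = h ^ 2 / 3 * f u₁ + u₁ * (h * d1 f u₁) := by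
        unfold boundaryFun; ring
    _ ≤ h ^ 2 / 3 * (73 / 64) + 7 / 8 * (-(7 / 8) * h ^ 2) := by
        have hX : h * d1 f u₁ ≤ 0 := hhd1.trans (by nlinarith [sq_nonneg h])
        refine add_le_add (by gcongr) ?_
        nlinarith [mul_nonpos_of_nonneg_of_nonpos (sub_nonneg.2 hu₁lo) hX]
    _ ≤ 0 := by nlinarith [sq_nonneg h]

end Estimates

end CM

theorem boundary_function_unique_zero_general
    (h M : ℝ) (f : ℝ → ℝ) (hf : CM M f)
    (hsmall : |h| / d2 f 1 < del h M) :
    StrictMonoOn (fun u => (h / 3) * f u + u * d1 f u) (Uset (del h M)) ∧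
    ∃ u₀ ∈ Uset (del h M),
      (h / 3) * f u₀ + u₀ * d1 f u₀ = 0 ∧
      (∀ u ∈ Uset (del h M), (h / 3) * f u + u * d1 f u = 0 → u = u₀) ∧
      |u₀ - 1| ≤ |h| / d2 f 1 ∧
      Real.sign (u₀ - 1) = - Real.sign h := by
  set δ := del h M
  have hδ : 0 ≤ δ := (div_nonneg (abs_nonneg h) hf.2.2.2.1.le).trans hsmall.le
  have hδ8 : δ ≤ 1 / 8 := del_le_one_div_eight h M
  have hMδ : M * δ ≤ 1 / 8 := mul_del_le hδ
  have hhδ : |h| * δ ≤ 1 / 8 := abs_mul_del_le h M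
  have hmono : StrictMonoOn (boundaryFun h f) (Uset δ) := hf.strictMonoOn_boundaryFun hδ8 hMδ hhδ
  set u₁ := 1 - h / d2 f 1
  have hdist : |u₁ - 1| = |h| / d2 f 1 := abs_one_sub_div_sub_one hf.2.2.2.1
  have hsub : uIcc 1 u₁ ⊆ Uset δ :=
    uIcc_subset_Icc (one_mem_Uset hδ) (mem_Uset.2 (hdist ▸ hsmall.le))
  have hsign : h / 3 * boundaryFun h f u₁ ≤ 0 := by
    linarith [hf.mul_boundaryFun_le_zero hδ8 hMδ hhδ hsmall.le]
  obtain ⟨u₀, hu₀, hzero⟩ := intermediate_value_uIcc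
    (hf.continuousOn_boundaryFun.mono (hsub.trans (Uset_subset_Iset hδ8)))
    (zero_mem_uIcc_of_mul_nonpos (by rwa [hf.boundaryFun_one]))
  refine ⟨hmono, u₀, hsub hu₀, hzero,
    fun u hu hu0 => hmono.injOn hu (hsub hu₀) (hu0.trans hzero.symm),
    hdist ▸ abs_sub_left_of_mem_uIcc hu₀, ?_⟩
  rw [hmono.sign_sub_eq (hsub hu₀) (one_mem_Uset hδ), hzero, hf.boundaryFun_one, zero_sub,
    Real.sign_neg, Real.sign_div_of_pos three_pos]

/-- if `|h|/β(f) < δ`, the boundary function `g(u) = (h/3)f(u) + uf'(u)`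
is strictly increasing on `U(δ)` with a unique zero `u₀` there, `|u₀ − 1| ≤ |h|/β(f)`
and `sgn(u₀ − 1) = −sgn h`. -/
theorem boundary_function_unique_zero
    (h M : ℝ) (hκ : 0 < kap h) (hM : 0 ≤ M)
    (f : ℝ → ℝ) (hf : CM M f)
    (hsmall : |h| / d2 f 1 < del h M) :
    StrictMonoOn (fun u => (h / 3) * f u + u * d1 f u) (Uset (del h M)) ∧
    ∃ u₀ ∈ Uset (del h M),
      (h / 3) * f u₀ + u₀ * d1 f u₀ = 0 ∧
      (∀ u ∈ Uset (del h M), (h / 3) * f u + u * d1 f u = 0 → u = u₀) ∧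
      |u₀ - 1| ≤ |h| / d2 f 1 ∧
      Real.sign (u₀ - 1) = - Real.sign h :=
  boundary_function_unique_zero_general h M f hf hsmall
end
end
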